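/- Let (X, μ) be a measure space, let f ∈ L²(X, μ) be nonzero, let E > 0, and let C > 0 and β > 0. Suppose that for every λ > 0 there exist g_λ, h_λ ∈ L²(X, μ) with f = g_λ + h_λ almost everywhere, ‖g_λ‖_{L^∞}² ≤ C λ^β · E, and that λ ↦ ‖h_λ‖_{L²}² is measurable with ∫₀^∞ ‖h_λ‖_{L²}² dλ ≤ E. Then f ∈ L^q(X, μ) for q = 2(1 + 1/β), and ‖f‖_{L^q} ≤ 2 · C^{1/(βq)} · √E. -/

import Mathlib

open MeasureTheory Set ENNReal

/-! If `‖g_λ‖_∞² ≤ Cλ^βE` and `f = g_λ + h_λ`, then wherever `f² > 4Cλ^βE` we have `|g_λ| ≤ |f|/2`,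
hence `f² ≤ 4h_λ²`: the part of `‖f‖₂²` above the level `Kλ^β`, `K = 4CE`, is at most
`4‖h_λ‖₂²`. Integrating over `λ > 0` and exchanging the integrals (Tonelli, on a σ-finite set
carrying `f ∈ L²`), a point `x` contributes `f(x)²` for `λ < (f(x)²/K)^{1/β}`, i.e.
`K^{-1/β}|f(x)|^q` in total. Hence `∫|f|^q ≤ K^{1/β}·4E`, and `(K^{1/β}·4E)^{1/q} = 2C^{1/(βq)}√E`.
-/

theorem Real.enorm_sq_eq_ofReal_sq (r : ℝ) : ‖r‖ₑ ^ 2 = ENNReal.ofReal (r ^ 2) := by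
  rw [Real.enorm_eq_ofReal_abs, ← ENNReal.ofReal_pow (abs_nonneg r), sq_abs]

theorem Ioi_inter_setOf_mul_rpow_lt {K β s : ℝ} (hK : 0 < K) (hβ : 0 < β) (hs : 0 ≤ s) :
    Ioi 0 ∩ {l : ℝ | K * l ^ β < s} = Ioo 0 ((s / K) ^ β⁻¹) := by
  ext l
  simp only [mem_inter_iff, mem_Ioi, mem_ofPred_eq, mem_Ioo, and_congr_right_iff]
  intro hl
  rw [Real.lt_rpow_inv_iff_of_pos hl.le (div_nonneg hs hK.le) hβ, lt_div_iff₀ hK, mul_comm]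

theorem mul_rpow_mul_sq_div_rpow_inv {K β r : ℝ} (hK : 0 < K) (hβ : 0 < β) (hr : 0 ≤ r) :
    K ^ β⁻¹ * (r ^ 2 * (r ^ 2 / K) ^ β⁻¹) = r ^ (2 * (1 + 1 / β)) := by
  have hsq : (r ^ 2) ^ β⁻¹ = r ^ (2 * β⁻¹) := by
    rw [← Real.rpow_natCast, ← Real.rpow_mul hr, Nat.cast_ofNat]
  have hsum : 2 * (1 + 1 / β) = (2 : ℕ) + 2 * β⁻¹ := by push_cast; ring
  rw [Real.div_rpow (sq_nonneg r) hK.le, hsq, hsum, Real.rpow_add' hr (by positivity),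
    Real.rpow_natCast]
  field_simp [(Real.rpow_pos_of_pos hK β⁻¹).ne']

theorem sq_le_four_mul_sq_sub_of_sq_le {a b x : ℝ} (hb : b ^ 2 ≤ a) (hx : 4 * a < x ^ 2) :
    x ^ 2 ≤ 4 * (x - b) ^ 2 := by
  -- `4 (x - b)² - x² = (x - 2b)(3x - 2b)`, and both factors have the sign of `x` since `|x| > 2|b|`
  nlinarith [sq_nonneg (x - 2 * b), sq_nonneg (3 * x - 2 * b), sq_nonneg x, sq_nonneg b]

theorem four_mul_rpow_inv_mul_four_mul_rpow_eq {C E β : ℝ} (hC : 0 < C) (hE : 0 < E)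
    (hβ : 0 < β) :
    ((4 * C * E) ^ β⁻¹ * (4 * E)) ^ (1 / (2 * (1 + 1 / β)))
      = 2 * C ^ (1 / (β * (2 * (1 + 1 / β)))) * √E := by
  have h4E : 0 < 4 * E := by positivity
  have hsplit : (4 * C * E) ^ β⁻¹ * (4 * E) = C ^ β⁻¹ * (4 * E) ^ (β⁻¹ + 1) := by
    rw [show 4 * C * E = C * (4 * E) by ring, Real.mul_rpow hC.le h4E.le,
      Real.rpow_add h4E, Real.rpow_one, mul_assoc]
  have hexpC : β⁻¹ * (1 / (2 * (1 + 1 / β))) = 1 / (β * (2 * (1 + 1 / β))) := by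
    field_simp
  have hexpE : (β⁻¹ + 1) * (1 / (2 * (1 + 1 / β))) = 1 / 2 := by
    field_simp
    ring
  rw [hsplit, Real.mul_rpow (by positivity) (by positivity), ← Real.rpow_mul hC.le,
    ← Real.rpow_mul h4E.le, hexpC, hexpE, ← Real.sqrt_eq_rpow, Real.sqrt_mul (by norm_num),
    show √(4 : ℝ) = 2 by rw [show (4 : ℝ) = 2 ^ 2 by norm_num, Real.sqrt_sq zero_le_two]]
  ring

section

variable {X : Type*} [MeasurableSpace X] {μ : Measure X}

theorem eLpNorm_two_sq_eq_lintegral (f : X → ℝ) : eLpNorm f 2 μ ^ 2 = ∫⁻ x, ‖f x‖ₑ ^ 2 ∂μ := by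
  simpa using eLpNorm_nnreal_pow_eq_lintegral (f := f) (μ := μ) (p := 2) two_ne_zero

theorem lintegral_enorm_rpow_eq_lintegral_Ioi_lintegral_indicator [SFinite μ] {f : X → ℝ}
    (hf : Measurable f) {K β : ℝ} (hK : 0 < K) (hβ : 0 < β) :
    ∫⁻ x, ‖f x‖ₑ ^ (2 * (1 + 1 / β)) ∂μ = ENNReal.ofReal (K ^ β⁻¹) *
      ∫⁻ l in Ioi 0, ∫⁻ x, {x | K * l ^ β < f x ^ 2}.indicator (fun x => ‖f x‖ₑ ^ 2) x ∂μ := by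
  have hmeas : Measurable (Function.uncurry fun l x =>
      {x | K * l ^ β < f x ^ 2}.indicator (fun x => ‖f x‖ₑ ^ 2) x) :=
    Measurable.indicator (by fun_prop) (measurableSet_lt (by fun_prop) (by fun_prop))
  have hinner (x : X) :
      ∫⁻ l in Ioi 0, {x | K * l ^ β < f x ^ 2}.indicator (fun x => ‖f x‖ₑ ^ 2) x
        = ENNReal.ofReal (f x ^ 2) * ENNReal.ofReal ((f x ^ 2 / K) ^ β⁻¹) := by
    change ∫⁻ l in Ioi 0,
      {l : ℝ | K * l ^ β < f x ^ 2}.indicator (fun _ => ‖f x‖ₑ ^ 2) l = _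
    rw [lintegral_indicator_const (measurableSet_lt (by fun_prop) (by fun_prop)),
      Measure.restrict_apply' measurableSet_Ioi, inter_comm,
      Ioi_inter_setOf_mul_rpow_lt hK hβ (sq_nonneg _), Real.volume_Ioo, sub_zero,
      Real.enorm_sq_eq_ofReal_sq]
  rw [lintegral_lintegral_swap hmeas.aemeasurable, ← lintegral_const_mul' _ _ ofReal_ne_top]
  refine lintegral_congr fun x => ?_
  rw [hinner, ← ENNReal.ofReal_mul (sq_nonneg _), ← ENNReal.ofReal_mul (by positivity),
    ← sq_abs, mul_rpow_mul_sq_div_rpow_inv hK hβ (abs_nonneg _), Real.enorm_eq_ofReal_abs,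
    ENNReal.ofReal_rpow_of_nonneg (abs_nonneg _) (by positivity)]

theorem lintegral_indicator_sq_le_of_ae_eq_add {f g h : X → ℝ} {a : ℝ} (ha : 0 ≤ a)
    (hfgh : f =ᵐ[μ] g + h) (hg : eLpNorm g ⊤ μ ^ 2 ≤ ENNReal.ofReal a) :
    ∫⁻ x, {x | 4 * a < f x ^ 2}.indicator (fun x => ‖f x‖ₑ ^ 2) x ∂μ
      ≤ 4 * eLpNorm h 2 μ ^ 2 := by
  have hg_pt : ∀ᵐ x ∂μ, g x ^ 2 ≤ a := by
    filter_upwards [ae_le_eLpNormEssSup (f := g) (μ := μ)] with x hx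
    rw [← ENNReal.ofReal_le_ofReal_iff ha, ← Real.enorm_sq_eq_ofReal_sq]
    exact (pow_le_pow_left₀ zero_le hx 2).trans (eLpNorm_exponent_top (f := g) ▸ hg)
  rw [eLpNorm_two_sq_eq_lintegral, ← lintegral_const_mul' _ _ (by norm_num)]
  refine lintegral_mono_ae ?_
  filter_upwards [hfgh, hg_pt] with x hfx hgx
  by_cases hx : 4 * a < f x ^ 2
  · have hhx : h x = f x - g x := by rw [hfx, Pi.add_apply]; ring
    rw [indicator_of_mem (show x ∈ {x | 4 * a < f x ^ 2} from hx), hhx,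
      Real.enorm_sq_eq_ofReal_sq, Real.enorm_sq_eq_ofReal_sq, ← ENNReal.ofReal_ofNat 4,
      ← ENNReal.ofReal_mul zero_le_four]
    exact ENNReal.ofReal_le_ofReal (sq_le_four_mul_sq_sub_of_sq_le hgx hx)
  · rw [indicator_of_notMem (show x ∉ {x | 4 * a < f x ^ 2} from hx)]
    exact zero_le

theorem lintegral_enorm_rpow_le_of_forall_ae_eq_add [SFinite μ] {f : X → ℝ}
    (hf : Measurable f) {g h : ℝ → X → ℝ} {C E β : ℝ} (hC : 0 < C) (hE : 0 < E) (hβ : 0 < β)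
    (h_dec : ∀ l, 0 < l →
      f =ᵐ[μ] g l + h l ∧ eLpNorm (g l) ⊤ μ ^ 2 ≤ ENNReal.ofReal (C * l ^ β * E))
    (h_int : ∫⁻ l in Ioi 0, eLpNorm (h l) 2 μ ^ 2 ≤ ENNReal.ofReal E) :
    ∫⁻ x, ‖f x‖ₑ ^ (2 * (1 + 1 / β)) ∂μ ≤ ENNReal.ofReal ((4 * C * E) ^ β⁻¹ * (4 * E)) := by
  have hlayer : ∀ l ∈ Ioi (0 : ℝ),
      ∫⁻ x, {x | 4 * C * E * l ^ β < f x ^ 2}.indicator (fun x => ‖f x‖ₑ ^ 2) x ∂μ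
        ≤ 4 * eLpNorm (h l) 2 μ ^ 2 := fun l hl => by
    obtain ⟨hfgh, hg⟩ := h_dec l hl
    have := Real.rpow_pos_of_pos hl β
    rw [show 4 * C * E * l ^ β = 4 * (C * l ^ β * E) by ring]
    exact lintegral_indicator_sq_le_of_ae_eq_add (by positivity) hfgh hg
  rw [lintegral_enorm_rpow_eq_lintegral_Ioi_lintegral_indicator hf (K := 4 * C * E)
      (by positivity) hβ,
    ENNReal.ofReal_mul (by positivity), ENNReal.ofReal_mul zero_le_four, ofReal_ofNat]
  gcongr
  calc _ ≤ ∫⁻ l in Ioi 0, 4 * eLpNorm (h l) 2 μ ^ 2 :=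
        setLIntegral_mono' measurableSet_Ioi hlayer
    _ ≤ 4 * ENNReal.ofReal E := by rw [lintegral_const_mul' _ _ ofNat_ne_top]; gcongr

end

theorem stmt_18_general {X : Type*} [MeasurableSpace X] (μ : Measure X)
    (f : X → ℝ)
    (E : ℝ) (hE : 0 < E) (C : ℝ) (hC : 0 < C) (β : ℝ) (hβ : 0 < β)
    (g h : ℝ → X → ℝ)
    (h_dec : ∀ l, 0 < l → MemLp (g l) 2 μ ∧ MemLp (h l) 2 μ ∧
      f =ᵐ[μ] g l + h l ∧
      (eLpNorm (g l) ⊤ μ) ^ 2 ≤ ENNReal.ofReal (C * l ^ β * E))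
    (h_int : ∫⁻ l in Ioi (0 : ℝ), (eLpNorm (h l) 2 μ) ^ 2 ≤ ENNReal.ofReal E)
    (q : ℝ) (hq : q = 2 * (1 + 1 / β)) :
    MemLp f (ENNReal.ofReal q) μ ∧
      eLpNorm f (ENNReal.ofReal q) μ
        ≤ ENNReal.ofReal (2 * C ^ (1 / (β * q)) * Real.sqrt E) := by
  subst hq
  obtain ⟨hg₁, hh₁, hf₁, -⟩ := h_dec 1 one_pos
  have hf : MemLp f 2 μ := (hg₁.add hh₁).ae_eq hf₁.symm
  obtain ⟨F, hF, hfF⟩ := hf.aefinStronglyMeasurable two_ne_zero ofNat_ne_top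
  obtain ⟨t, -, hFt, _⟩ := hF.exists_set_sigmaFinite
  have hbound := lintegral_enorm_rpow_le_of_forall_ae_eq_add (μ := μ.restrict t) hF.measurable
    hC hE hβ (fun l hl => ⟨ae_restrict_of_ae (hfF.symm.trans (h_dec l hl).2.2.1),
      (pow_le_pow_left₀ zero_le (eLpNorm_restrict_le _ _ _ _) 2).trans (h_dec l hl).2.2.2⟩)
    ((lintegral_mono fun l => pow_le_pow_left₀ zero_le (eLpNorm_restrict_le _ _ _ _) 2).trans
      h_int)
  have hq : 0 < 2 * (1 + 1 / β) := by positivity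
  have hnorm : eLpNorm f (ENNReal.ofReal (2 * (1 + 1 / β))) μ
      ≤ ENNReal.ofReal (2 * C ^ (1 / (β * (2 * (1 + 1 / β)))) * √E) := by
    rw [eLpNorm_congr_ae hfF, ← eLpNorm_restrict_eq_of_support_subset (s := t)
      (fun x hx => by_contra fun hxt => hx (hFt x hxt)),
      eLpNorm_eq_lintegral_rpow_enorm_toReal (by simpa using hq) ofReal_ne_top,
      toReal_ofReal hq.le, ← four_mul_rpow_inv_mul_four_mul_rpow_eq hC hE hβ,
      ← ENNReal.ofReal_rpow_of_nonneg (by positivity) (by positivity)]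
    exact ENNReal.rpow_le_rpow hbound (by positivity)
  exact ⟨⟨hf.1, hnorm.trans_lt ofReal_lt_top⟩, hnorm⟩

/-- polynomial-decay case of Theorem 1.1, yielding
Theorem 1.4. Given a spectral-type decomposition `f = g λ + h λ` with
`‖g λ‖_∞² ≤ C λ^β E` and `∫₀^∞ ‖h λ‖₂² dλ ≤ E`, one has `f ∈ L^q` for
`q = 2(1 + 1/β)` with `‖f‖_q ≤ 2 C^{1/(βq)} √E`. -/
theorem stmt_18 {X : Type*} [MeasurableSpace X] (μ : Measure X)
    (f : X → ℝ) (hf : MemLp f 2 μ) (hf_ne : ¬ f =ᵐ[μ] 0)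
    (E : ℝ) (hE : 0 < E) (C : ℝ) (hC : 0 < C) (β : ℝ) (hβ : 0 < β)
    (g h : ℝ → X → ℝ)
    (h_dec : ∀ l, 0 < l → MemLp (g l) 2 μ ∧ MemLp (h l) 2 μ ∧
      f =ᵐ[μ] g l + h l ∧
      (eLpNorm (g l) ⊤ μ) ^ 2 ≤ ENNReal.ofReal (C * l ^ β * E))
    (h_meas : Measurable fun l : ℝ => (eLpNorm (h l) 2 μ) ^ 2)
    (h_int : ∫⁻ l in Ioi (0 : ℝ), (eLpNorm (h l) 2 μ) ^ 2 ≤ ENNReal.ofReal E)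
    (q : ℝ) (hq : q = 2 * (1 + 1 / β)) :
    MemLp f (ENNReal.ofReal q) μ ∧
      eLpNorm f (ENNReal.ofReal q) μ
        ≤ ENNReal.ofReal (2 * C ^ (1 / (β * q)) * Real.sqrt E) :=
  stmt_18_general μ f E hE C hC β hβ g h h_dec h_int q hq
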